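/- Let d ≥ 2 and 1 ≤ p < ∞. For any measurable function h on ℝ^d = ℝ × ℝ^{d−1}, writing x = (x_1, x'), one has ‖h‖_{L^{p,∞}(ℝ^d)} ≤ (∫_{ℝ^{d−1}} ‖h(·, x')‖_{L^{p,∞}(ℝ)}^p dx')^{1/p}. -/
import Mathlib


open MeasureTheory Set
open scoped ENNReal NNReal BigOperators

noncomputable section

/-- Weak Lorentz norm `‖g‖_{L^{p,∞}(μ)} = sup_{α>0} α · μ{x : |g(x)| > α}^{1/p}`. -/
def wNorm (p : ℝ) {α : Type*} [MeasurableSpace α] (μ : Measure α) (g : α → ℂ) : ℝ≥0∞ :=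
  ⨆ (a : ℝ≥0) (_ : 0 < a), (a : ℝ≥0∞) * (μ {x | (a : ℝ≥0∞) < (‖g x‖₊ : ℝ≥0∞)}) ^ (1 / p)

/-- **Slicing inequality for weak Lorentz norms.** Let `d = k + 1 ≥ 2` and
`1 ≤ p < ∞`. For a measurable function `h` on `ℝ^d = ℝ × ℝ^{d-1}`, writing
`x = (x₁, x')`, one has
`‖h‖_{L^{p,∞}(ℝ^d)} ≤ (∫_{ℝ^{d-1}} ‖h(·, x')‖_{L^{p,∞}(ℝ)}^p dx')^{1/p}`. -/
theorem wNorm_le_lintegral_slices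
    {k : ℕ} (hk : 1 ≤ k) (p : ℝ) (hp : 1 ≤ p)
    (h : ℝ × (Fin k → ℝ) → ℂ) (hmeas : Measurable h) :
    wNorm p (volume : Measure (ℝ × (Fin k → ℝ))) h
      ≤ (∫⁻ x' : Fin k → ℝ,
          (wNorm p (volume : Measure ℝ) (fun x1 => h (x1, x'))) ^ p) ^ (1 / p) := by
  have hp0 : (0:ℝ) < p := lt_of_lt_of_le one_pos hp
  rw [wNorm]
  refine iSup_le fun a => iSup_le fun ha => ?_
  set s := {x : ℝ × (Fin k → ℝ) | (a:ℝ≥0∞) < (‖h x‖₊ : ℝ≥0∞)} with hs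
  have hsm : MeasurableSet s :=
    measurableSet_lt measurable_const hmeas.nnnorm.coe_nnreal_ennreal
  have key : volume s
      = ∫⁻ x' : Fin k → ℝ, volume {x1 : ℝ | (a:ℝ≥0∞) < (‖h (x1, x')‖₊ : ℝ≥0∞)} := by
    rw [show (volume : Measure (ℝ × (Fin k → ℝ))) = (volume : Measure ℝ).prod volume from
      rfl, Measure.prod_apply_symm hsm]
    rfl
  have slice_le : ∀ x' : Fin k → ℝ,
      (a:ℝ≥0∞) ^ p * volume {x1 : ℝ | (a:ℝ≥0∞) < (‖h (x1, x')‖₊ : ℝ≥0∞)}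
        ≤ (wNorm p (volume : Measure ℝ) (fun x1 => h (x1, x'))) ^ p := by
    intro x'
    have h1 : (a:ℝ≥0∞) * (volume {x1 : ℝ | (a:ℝ≥0∞) < (‖h (x1, x')‖₊ : ℝ≥0∞)}) ^ (1/p)
        ≤ wNorm p (volume : Measure ℝ) (fun x1 => h (x1, x')) := by
      rw [wNorm]
      exact le_iSup₂ (f := fun (b : ℝ≥0) (_ : 0 < b) =>
        (b : ℝ≥0∞) * (volume {x | (b : ℝ≥0∞) < (‖h (x, x')‖₊ : ℝ≥0∞)}) ^ (1/p)) a ha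
    calc (a:ℝ≥0∞) ^ p * volume {x1 : ℝ | (a:ℝ≥0∞) < (‖h (x1, x')‖₊ : ℝ≥0∞)}
        = ((a:ℝ≥0∞) * (volume {x1 : ℝ | (a:ℝ≥0∞) < (‖h (x1, x')‖₊ : ℝ≥0∞)}) ^ (1/p)) ^ p := by
          rw [ENNReal.mul_rpow_of_nonneg _ _ hp0.le, ← ENNReal.rpow_mul,
            one_div_mul_cancel hp0.ne', ENNReal.rpow_one]
      _ ≤ (wNorm p (volume : Measure ℝ) (fun x1 => h (x1, x'))) ^ p :=
          ENNReal.rpow_le_rpow h1 hp0.le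
  have main : (a:ℝ≥0∞) ^ p * volume s
      ≤ ∫⁻ x' : Fin k → ℝ, (wNorm p (volume : Measure ℝ) (fun x1 => h (x1, x'))) ^ p := by
    rw [key, ← lintegral_const_mul' _ _ (ENNReal.rpow_ne_top_of_nonneg hp0.le ENNReal.coe_ne_top)]
    exact lintegral_mono slice_le
  calc (a:ℝ≥0∞) * (volume s) ^ (1/p) = ((a:ℝ≥0∞) ^ p * volume s) ^ (1/p) := by
        rw [ENNReal.mul_rpow_of_nonneg _ _ (by positivity : (0:ℝ) ≤ 1/p),
          ← ENNReal.rpow_mul, mul_one_div_cancel hp0.ne', ENNReal.rpow_one]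
    _ ≤ _ := ENNReal.rpow_le_rpow main (by positivity)
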